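/- For a reduced undirected s-t graph G (every vertex and edge on some s-t path), every feedback edge set F of G is a tracking edge set for G. -/

import Mathlib

open SimpleGraph

noncomputable def etrackSeq {V : Type} (T : Set (Sym2 V)) (l : List (Sym2 V)) : List (Sym2 V) :=
  l.filter (fun e => @decide (e ∈ T) (Classical.propDecidable _))

/-- `T` is a tracking edge set for `G`: distinct `s`-`t` paths have distinct
sequences of `T`-edges along them. -/
def IsTrackingEdgeSet {V : Type} (G : SimpleGraph V) (s t : V) (T : Set (Sym2 V)) : Prop :=
  ∀ p q : G.Walk s t, p.IsPath → q.IsPath →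
    etrackSeq T p.edges = etrackSeq T q.edges → p = q

/-- `F` is a feedback edge set: deleting the edges of `F` makes `G` acyclic. -/
def IsFES {V : Type} (G : SimpleGraph V) (F : Set (Sym2 V)) : Prop :=
  (G.deleteEdges F).IsAcyclic

/-- Every vertex and every edge of `G` lies on some `s`-`t` path. -/
def Reduced {V : Type} (G : SimpleGraph V) (s t : V) : Prop :=
  (∀ v : V, ∃ p : G.Walk s t, p.IsPath ∧ v ∈ p.support) ∧
  (∀ e ∈ G.edgeSet, ∃ p : G.Walk s t, p.IsPath ∧ e ∈ p.edges)

/-! If two `s`-`t` paths carry the same sequence of `F`-edges, they use the same `F`-edges, so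
the symmetric difference of their edge sets avoids `F` and spans a forest. Every vertex meets
an even number of edges of that symmetric difference, since it is an inner vertex or an end
of both paths alike. A forest without leaves has no edges, so the two paths have the same edge
set, and a path is determined by its edge set. -/

open Finset
open scoped symmDiff

namespace Finset

variable {α : Type*} [DecidableEq α]

theorem filter_symmDiff (p : α → Prop) [DecidablePred p] (s t : Finset α) :
    (s ∆ t).filter p = s.filter p ∆ t.filter p := by
  ext a
  simp only [mem_filter, mem_symmDiff]
  tauto

theorem card_symmDiff_add_two_mul_card_inter (s t : Finset α) :
    #(s ∆ t) + 2 * #(s ∩ t) = #s + #t := by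
  have hs := card_sdiff_add_card_inter s t
  have ht := card_sdiff_add_card_inter t s
  rw [Finset.symmDiff_def, card_union_of_disjoint disjoint_sdiff_sdiff, inter_comm t s] at *
  omega

theorem even_card_symmDiff_iff (s t : Finset α) : Even #(s ∆ t) ↔ Even (#s + #t) := by
  rw [← card_symmDiff_add_two_mul_card_inter s t]
  simp [Nat.even_add]

end Finset

namespace SimpleGraph

variable {V : Type*} {G : SimpleGraph V}

theorem IsAcyclic.eq_bot_of_degree_ne_one [Finite G.edgeSet] [G.LocallyFinite]
    (hG : G.IsAcyclic) (hdeg : ∀ v, G.degree v ≠ 1) : G = ⊥ := by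
  by_contra hne
  obtain ⟨a, b, hab⟩ := ne_bot_iff_exists_adj.mp hne
  have : Nonempty V := ⟨a⟩
  -- the start `u` of a longest path is a leaf
  obtain ⟨u, v, p, hp, hmax⟩ := Walk.exists_isPath_forall_isPath_length_le_length G
  have hnil : ¬p.Nil := by
    have := hmax a b _ (Walk.IsPath.mk' (by simp [hab.ne]) : (hab.toWalk).IsPath)
    intro h
    simp [h.length_eq_zero] at this
  refine hdeg u (degree_eq_one_iff_existsUnique_adj.mpr ⟨_, p.adj_snd hnil, fun w hadj ↦ ?_⟩)
  apply hG.eq_snd_of_adj_start hp hadj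
  by_contra hw
  have := hmax _ _ _ (hp.cons (h := hadj.symm) hw)
  simp at this

theorem degree_fromEdgeSet_finset [DecidableEq V] {E : Finset (Sym2 V)}
    (hE : ∀ e ∈ E, ¬e.IsDiag) (x : V)
    [Fintype ((fromEdgeSet (E : Set (Sym2 V))).neighborSet x)] :
    (fromEdgeSet (E : Set (Sym2 V))).degree x = #(E.filter (x ∈ ·)) := by
  rw [← card_incidenceFinset_eq_degree, incidenceFinset_eq_filter]
  congr 1
  ext e
  simp only [mem_filter, mem_edgeFinset, edgeSet_fromEdgeSet, Set.mem_sdiff, mem_coe,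
    Sym2.mem_diagSet]
  exact ⟨fun h ↦ ⟨h.1.1, h.2⟩, fun h ↦ ⟨⟨h.1, hE e h.1⟩, h.2⟩⟩

namespace Walk

theorem IsPath.eq_snd_of_mk_mem_edges {u v w : V} {p : G.Walk u v} (hp : p.IsPath)
    (he : s(u, w) ∈ p.edges) : w = p.snd := by
  cases p with
  | nil => simp at he
  | cons h p =>
    rw [cons_isPath_iff] at hp
    rw [edges_cons, List.mem_cons] at he
    rcases he with he | he
    · simpa using Sym2.congr_right.mp he
    · exact absurd (p.fst_mem_support_of_mem_edges he) hp.2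

theorem IsTrail.eq_of_edges_subset {u v : V} {p q : G.Walk u v} (hp : p.IsPath)
    (hq : q.IsTrail) (hsub : q.edges ⊆ p.edges) : q = p := by
  induction q with
  | nil => exact (isPath_iff_nil.mp hp).eq_nil.symm
  | @cons u w v h q ih =>
    rw [isTrail_cons] at hq
    have hfirst : s(u, w) ∈ p.edges := hsub (by simp)
    cases p with
    | nil => simp at hfirst
    | cons h' p =>
      obtain rfl : w = _ := by simpa using hp.eq_snd_of_mk_mem_edges hfirst
      have htail : q.edges ⊆ p.edges := fun e he ↦ by
        have := hsub (List.mem_cons_of_mem _ he)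
        rw [edges_cons, List.mem_cons] at this
        exact this.resolve_left (by rintro rfl; exact hq.2 he)
      rw [ih ((cons_isPath_iff _ _).mp hp).1 hq.1 htail]

@[simp]
theorem IsTrail.mem_edgesFinset {u v : V} {p : G.Walk u v} (hp : p.IsTrail) {e : Sym2 V} :
    e ∈ hp.edgesFinset ↔ e ∈ p.edges :=
  Multiset.mem_coe

theorem IsTrail.card_filter_mem_edgesFinset [DecidableEq V] {u v : V} {p : G.Walk u v}
    (hp : p.IsTrail) (x : V) :
    #(hp.edgesFinset.filter (x ∈ ·)) = p.edges.countP fun e => x ∈ e := by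
  rw [← Multiset.coe_countP, Multiset.countP_eq_card_filter]
  rfl

theorem IsTrail.even_card_filter_mem_symmDiff [DecidableEq V] {u v : V} {p q : G.Walk u v}
    (hp : p.IsTrail) (hq : q.IsTrail) (x : V) :
    Even #((hp.edgesFinset ∆ hq.edgesFinset).filter (x ∈ ·)) := by
  rw [filter_symmDiff, even_card_symmDiff_iff, hp.card_filter_mem_edgesFinset,
    hq.card_filter_mem_edgesFinset, Nat.even_add, hp.even_countP_edges_iff,
    hq.even_countP_edges_iff]

theorem IsPath.eq_of_isAcyclic_fromEdgeSet_symmDiff [Fintype V] {u v : V} {p q : G.Walk u v}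
    (hp : p.IsPath) (hq : q.IsPath) (hac : (fromEdgeSet (p.edgeSet ∆ q.edgeSet)).IsAcyclic) :
    p = q := by
  classical
  set E := hp.isTrail.edgesFinset ∆ hq.isTrail.edgesFinset
  have hEdiag : ∀ e ∈ E, ¬e.IsDiag := fun e he ↦ by
    rcases Finset.mem_symmDiff.mp he with ⟨he, -⟩ | ⟨he, -⟩
    · exact G.not_isDiag_of_mem_edgeSet (p.edges_subset_edgeSet he)
    · exact G.not_isDiag_of_mem_edgeSet (q.edges_subset_edgeSet he)
  have hE : (E : Set (Sym2 V)) = p.edgeSet ∆ q.edgeSet := by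
    ext e; simp [E, Set.mem_symmDiff, edgeSet]
  rw [← hE] at hac
  have hbot := hac.eq_bot_of_degree_ne_one fun x h ↦ by
    rw [degree_fromEdgeSet_finset hEdiag] at h
    exact Nat.not_even_one (h ▸ hp.isTrail.even_card_filter_mem_symmDiff hq.isTrail x)
  refine (hq.isTrail.eq_of_edges_subset hp fun e he ↦ ?_).symm
  by_contra hep
  have hmem : e ∈ (fromEdgeSet (E : Set (Sym2 V))).edgeSet := by
    rw [edgeSet_fromEdgeSet]
    exact ⟨by simp [hE, Set.mem_symmDiff, edgeSet, he, hep],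
      G.not_isDiag_of_mem_edgeSet (q.edges_subset_edgeSet he)⟩
  simp [hbot] at hmem

theorem fromEdgeSet_symmDiff_le_deleteEdges {u v u' v' : V} (p : G.Walk u v) (q : G.Walk u' v')
    {F : Set (Sym2 V)} (h : ∀ e ∈ F, e ∈ p.edges ↔ e ∈ q.edges) :
    fromEdgeSet (p.edgeSet ∆ q.edgeSet) ≤ G.deleteEdges F := fun a b hab ↦ by
  rw [fromEdgeSet_adj, Set.mem_symmDiff] at hab
  rw [deleteEdges_adj]
  rcases hab.1 with ⟨hp, hq⟩ | ⟨hq, hp⟩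
  · exact ⟨p.adj_of_mem_edges hp, fun hF ↦ hq ((h _ hF).mp hp)⟩
  · exact ⟨q.adj_of_mem_edges hq, fun hF ↦ hp ((h _ hF).mpr hq)⟩

end Walk

end SimpleGraph

theorem mem_iff_mem_of_etrackSeq_eq {V : Type} {T : Set (Sym2 V)} {l l' : List (Sym2 V)}
    (h : etrackSeq T l = etrackSeq T l') {e : Sym2 V} (he : e ∈ T) : e ∈ l ↔ e ∈ l' := by
  have key : ∀ {m : List (Sym2 V)}, e ∈ etrackSeq T m ↔ e ∈ m := by
    simp [etrackSeq, he]
  rw [← key, h, key]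

theorem stmt11_general {V : Type} [Fintype V] (G : SimpleGraph V) (s t : V)
    (F : Set (Sym2 V)) (hF : IsFES G F) :
    IsTrackingEdgeSet G s t F := by
  intro p q hp hq htrack
  refine hp.eq_of_isAcyclic_fromEdgeSet_symmDiff hq (hF.anti ?_)
  exact Walk.fromEdgeSet_symmDiff_le_deleteEdges p q fun e he ↦
    mem_iff_mem_of_etrackSeq_eq htrack he

theorem stmt11 {V : Type} [Fintype V] (G : SimpleGraph V) (s t : V)
    (hred : Reduced G s t) (F : Set (Sym2 V)) (hF : IsFES G F) :
    IsTrackingEdgeSet G s t F :=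
  stmt11_general G s t F hF
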